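/- Composition theorem: let Y, W, Z be pointed metric spaces, u : Y → W an MS-Lipschitz p-summing operator, and v : W → Z an MS-strongly Lipschitz p-summing operator. Then the composition T = v ∘ u is MS-Lipschitz p-nuclear. -/

import Mathlib

open scoped TensorProduct
open NormedSpace Finset

noncomputable section

/-- The strong `ℓ_p^m` norm of a finite family in a normed space. -/
def strongLp {E : Type*} [NormedAddCommGroup E] (p : ℝ) {m : ℕ} (x : Fin m → E) : ℝ :=
  (∑ j, ‖x j‖ ^ p) ^ (1 / p)

/-- The weak `ℓ_p^{m,w}` norm of a finite family in a normed space. -/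
def weakLp {E : Type*} [NormedAddCommGroup E] [NormedSpace ℝ E] (p : ℝ) {m : ℕ}
    (x : Fin m → E) : ℝ :=
  sSup {r : ℝ | ∃ φ : StrongDual ℝ E, ‖φ‖ ≤ 1 ∧ r = (∑ j, |φ (x j)| ^ p) ^ (1 / p)}

/-- A continuous linear operator is `p`-summing. -/
def IsPSumming {E F : Type*} [NormedAddCommGroup E] [NormedSpace ℝ E]
    [NormedAddCommGroup F] [NormedSpace ℝ F] (p : ℝ) (u : E →L[ℝ] F) : Prop :=
  ∃ K > 0, ∀ (m : ℕ) (x : Fin m → E),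
    strongLp p (fun j => u (x j)) ≤ K * weakLp p x

/-- A continuous linear operator is (Cohen) strongly `p`-summing (`q` is the conjugate of `p`). -/
def IsStronglyPSumming {E F : Type*} [NormedAddCommGroup E] [NormedSpace ℝ E]
    [NormedAddCommGroup F] [NormedSpace ℝ F] (p q : ℝ) (u : E →L[ℝ] F) : Prop :=
  ∃ K > 0, ∀ (m : ℕ) (x : Fin m → E) (φ : Fin m → StrongDual ℝ F),
    ∑ j, |φ j (u (x j))| ≤ K * strongLp p x * weakLp q φ

/-- A continuous linear operator is (Cohen) `p`-nuclear (`q` is the conjugate of `p`). -/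
def IsPNuclear {E F : Type*} [NormedAddCommGroup E] [NormedSpace ℝ E]
    [NormedAddCommGroup F] [NormedSpace ℝ F] (p q : ℝ) (u : E →L[ℝ] F) : Prop :=
  ∃ K > 0, ∀ (m : ℕ) (x : Fin m → E) (φ : Fin m → StrongDual ℝ F),
    ∑ j, |φ j (u (x j))| ≤ K * weakLp p x * weakLp q φ

/-- The Chevet–Saphar norm `d_p` on a tensor product (`q` is the conjugate of `p`):
infimum over all finite representations of `z`. -/
def dpNorm {E G : Type*} [NormedAddCommGroup E] [NormedSpace ℝ E]
    [NormedAddCommGroup G] [NormedSpace ℝ G] (p q : ℝ) (z : TensorProduct ℝ E G) : ℝ :=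
  sInf {r : ℝ | ∃ (m : ℕ) (n : Fin m → E) (h : Fin m → G),
    z = ∑ j, n j ⊗ₜ[ℝ] h j ∧ r = weakLp p n * strongLp q h}

/-- The Chevet–Saphar norm `g_p` on a tensor product (`q` is the conjugate of `p`). -/
def gpNorm {E G : Type*} [NormedAddCommGroup E] [NormedSpace ℝ E]
    [NormedAddCommGroup G] [NormedSpace ℝ G] (p q : ℝ) (z : TensorProduct ℝ E G) : ℝ :=
  sInf {r : ℝ | ∃ (m : ℕ) (n : Fin m → E) (h : Fin m → G),
    z = ∑ j, n j ⊗ₜ[ℝ] h j ∧ r = strongLp p n * weakLp q h}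

/-- The tensor norm `w_p` (`q` is the conjugate of `p`). -/
def wpNorm {E G : Type*} [NormedAddCommGroup E] [NormedSpace ℝ E]
    [NormedAddCommGroup G] [NormedSpace ℝ G] (p q : ℝ) (z : TensorProduct ℝ E G) : ℝ :=
  sInf {r : ℝ | ∃ (m : ℕ) (n : Fin m → E) (h : Fin m → G),
    z = ∑ j, n j ⊗ₜ[ℝ] h j ∧ r = weakLp p n * weakLp q h}

/-- `E`, together with the map `δ : Y → E`, is (isometrically) the Lipschitz-free space
of the pointed metric space `(Y, y₀)`: `δ` sends the base point to `0`, is an isometric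
embedding, has dense linear span, and the norm of finite combinations of point evaluations
is computed against the unit ball of `Lip₀(Y)`. -/
structure IsFreeSpace (Y : Type*) [MetricSpace Y] (y₀ : Y)
    (E : Type*) [NormedAddCommGroup E] [NormedSpace ℝ E] [CompleteSpace E]
    (δ : Y → E) : Prop where
  map_base : δ y₀ = 0
  isometry : ∀ x y : Y, ‖δ x - δ y‖ = dist x y
  dense_span : (Submodule.span ℝ (Set.range δ)).topologicalClosure = ⊤
  norm_eq : ∀ (n : ℕ) (a : Fin n → ℝ) (x : Fin n → Y),
    ‖∑ i, a i • δ (x i)‖ =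
      sSup {r : ℝ | ∃ s : Y → ℝ, LipschitzWith 1 s ∧ s y₀ = 0 ∧ r = |∑ i, a i * s (x i)|}

end

noncomputable section

variable {Y W FY FW : Type*} [MetricSpace Y] [MetricSpace W]
  [NormedAddCommGroup FY] [NormedSpace ℝ FY] [NormedAddCommGroup FW] [NormedSpace ℝ FW]

/-- `T : Y → W` is MS-Lipschitz `p`-summing (`q` is the conjugate of `p`), the free spaces
of `Y` and `W` being realized as `FY`, `FW` via `δY`, `δW`.  Elements of `W^# = F(W)^*` are
encoded as elements of `Dual ℝ FW`, and `d_p^L` is the Chevet–Saphar norm computed in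
`F(Y) ⊗ W^#`. -/
def MSLipPSumming (p q : ℝ) (δY : Y → FY) (δW : W → FW) (T : Y → W) : Prop :=
  ∃ K > 0, ∀ (k : ℕ) (x y : Fin k → Y) (f : Fin k → StrongDual ℝ FW),
    |∑ l, (f l (δW (T (x l))) - f l (δW (T (y l))))| ≤
      K * dpNorm p q (∑ l, (δY (x l) - δY (y l)) ⊗ₜ[ℝ] f l)

/-- `T : Y → W` is MS-strongly Lipschitz `p`-summing (`q` is the conjugate of `p`). -/
def MSStronglyLipPSumming (p q : ℝ) (δY : Y → FY) (δW : W → FW) (T : Y → W) : Prop :=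
  ∃ K > 0, ∀ (k : ℕ) (x y : Fin k → Y) (f : Fin k → StrongDual ℝ FW),
    |∑ l, (f l (δW (T (x l))) - f l (δW (T (y l))))| ≤
      K * gpNorm p q (∑ l, (δY (x l) - δY (y l)) ⊗ₜ[ℝ] f l)

/-- `T : Y → W` is MS-Lipschitz `p`-nuclear (`q` is the conjugate of `p`). -/
def MSLipPNuclear (p q : ℝ) (δY : Y → FY) (δW : W → FW) (T : Y → W) : Prop :=
  ∃ K > 0, ∀ (k : ℕ) (x y : Fin k → Y) (f : Fin k → StrongDual ℝ FW),
    |∑ l, (f l (δW (T (x l))) - f l (δW (T (y l))))| ≤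
      K * wpNorm p q (∑ l, (δY (x l) - δY (y l)) ⊗ₜ[ℝ] f l)

end

/-!
Linearize `u` and `v` to bounded operators `ũ : F(Y) → F(W)` and `ṽ : F(W) → F(Z)`. Evaluated
on a molecule tensor `∑ (δ x - δ y) ⊗ f`, the trace pairing of `ũ` is exactly the left-hand side
of the MS inequalities, and these tensors exhaust `span δ(Y) ⊗ W^#`. Combined with `ℓ_p`-`ℓ_q`
duality (and a choice of signs for the strong version) this makes `ũ` `p`-summing and `ṽ`
strongly `p`-summing on tuples from the span of the point evaluations, hence on all tuples since
both inequalities are closed conditions and the span is dense. By Cohen's theorem `ṽ ∘ ũ`, the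
linearization of `v ∘ u`, is `p`-nuclear, and the trace pairing of a `p`-nuclear operator is
bounded by the `w_p` tensor norm.
-/

open Filter Topology

section LpNorms

variable {E : Type*} [NormedAddCommGroup E] {p : ℝ} {m : ℕ}

lemma strongLp_nonneg (x : Fin m → E) : 0 ≤ strongLp p x := by
  unfold strongLp; positivity

lemma strongLp_zero (hp : 0 < p) : strongLp p (0 : Fin m → E) = 0 := by
  simp [strongLp, Real.zero_rpow hp.ne', Real.zero_rpow (inv_pos.2 hp).ne']

lemma strongLp_sub_comm (x y : Fin m → E) : strongLp p (x - y) = strongLp p (y - x) := by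
  simp only [strongLp, Pi.sub_apply, norm_sub_rev]

lemma strongLp_mono {F : Type*} [NormedAddCommGroup F] (hp : 0 ≤ p) {x : Fin m → E}
    {y : Fin m → F} (h : ∀ j, ‖x j‖ ≤ ‖y j‖) : strongLp p x ≤ strongLp p y := by
  unfold strongLp
  gcongr with j
  exact h j

lemma strongLp_add_le (hp : 1 ≤ p) (x y : Fin m → E) :
    strongLp p (x + y) ≤ strongLp p x + strongLp p y :=
  calc strongLp p (x + y) ≤ (∑ j, (‖x j‖ + ‖y j‖) ^ p) ^ (1 / p) := by
        unfold strongLp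
        gcongr with j
        exact norm_add_le _ _
    _ ≤ strongLp p x + strongLp p y :=
        Real.Lp_add_le_of_nonneg _ hp (fun _ _ => norm_nonneg _) fun _ _ => norm_nonneg _

lemma continuous_strongLp (hp : 0 < p) : Continuous (strongLp p : (Fin m → E) → ℝ) :=
  (continuous_finsetSum _ fun j _ => (continuous_apply j).norm.rpow_const fun _ =>
    Or.inr hp.le).rpow_const fun _ => Or.inr (one_div_pos.2 hp).le

variable [NormedSpace ℝ E]

lemma weakLp_eq (x : Fin m → E) :
    weakLp p x = sSup {r | ∃ φ : StrongDual ℝ E, ‖φ‖ ≤ 1 ∧ r = strongLp p fun j => φ (x j)} := by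
  simp only [weakLp, strongLp, Real.norm_eq_abs]

lemma weakLp_nonneg (x : Fin m → E) : 0 ≤ weakLp p x :=
  Real.sSup_nonneg <| by rintro _ ⟨φ, -, rfl⟩; positivity

lemma strongLp_apply_le_weakLp (hp : 0 ≤ p) {φ : StrongDual ℝ E} (hφ : ‖φ‖ ≤ 1)
    (x : Fin m → E) : (strongLp p fun j => φ (x j)) ≤ weakLp p x := by
  have hle : ∀ ψ : StrongDual ℝ E, ‖ψ‖ ≤ 1 → (strongLp p fun j => ψ (x j)) ≤ strongLp p x :=
    fun ψ hψ => strongLp_mono hp fun j => by simpa using ψ.le_of_opNorm_le hψ (x j)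
  rw [weakLp_eq]
  exact le_csSup ⟨strongLp p x, by rintro _ ⟨ψ, hψ, rfl⟩; exact hle ψ hψ⟩ ⟨φ, hφ, rfl⟩

lemma weakLp_le_of_forall {x : Fin m → E} {C : ℝ} (hC : 0 ≤ C)
    (h : ∀ φ : StrongDual ℝ E, ‖φ‖ ≤ 1 → (strongLp p fun j => φ (x j)) ≤ C) :
    weakLp p x ≤ C := by
  rw [weakLp_eq]
  exact Real.sSup_le (by rintro _ ⟨φ, hφ, rfl⟩; exact h φ hφ) hC

lemma weakLp_le_add_strongLp_sub (hp : 1 ≤ p) (x y : Fin m → E) :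
    weakLp p x ≤ weakLp p y + strongLp p (x - y) := by
  refine weakLp_le_of_forall (add_nonneg (weakLp_nonneg y) (strongLp_nonneg _)) fun φ hφ => ?_
  calc (strongLp p fun j => φ (x j))
      = strongLp p ((fun j => φ (y j)) + fun j => φ ((x - y) j)) := by
        congr 1; ext j; simp
    _ ≤ (strongLp p fun j => φ (y j)) + strongLp p fun j => φ ((x - y) j) :=
        strongLp_add_le hp _ _
    _ ≤ weakLp p y + strongLp p (x - y) := by
        gcongr
        · exact strongLp_apply_le_weakLp (by linarith) hφ y
        · exact strongLp_mono (by linarith) fun j => by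
            simpa using φ.le_of_opNorm_le hφ ((x - y) j)

lemma continuous_weakLp (hp : 1 ≤ p) : Continuous (weakLp p : (Fin m → E) → ℝ) := by
  refine continuous_iff_continuousAt.2 fun x => ?_
  have hp0 : 0 < p := by linarith
  have hsmall : Tendsto (fun y => strongLp p (y - x)) (𝓝 x) (𝓝 0) := by
    have hcont : Continuous fun y : Fin m → E => strongLp p (y - x) :=
      (continuous_strongLp hp0).comp (continuous_id.sub continuous_const)
    simpa [strongLp_zero hp0] using hcont.tendsto x
  rw [ContinuousAt, tendsto_iff_norm_sub_tendsto_zero]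
  refine squeeze_zero (fun _ => norm_nonneg _) (fun y => ?_) hsmall
  rw [Real.norm_eq_abs, abs_sub_le_iff]
  constructor
  · linarith [weakLp_le_add_strongLp_sub hp y x]
  · linarith [weakLp_le_add_strongLp_sub hp x y, strongLp_sub_comm (p := p) x y]

lemma weakLp_smul_le (hp : 0 ≤ p) (x : Fin m → E) {c : Fin m → ℝ} (hc : ∀ j, |c j| ≤ 1) :
    weakLp p (fun j => c j • x j) ≤ weakLp p x :=
  weakLp_le_of_forall (weakLp_nonneg x) fun φ hφ =>
    (strongLp_mono hp fun j => by
      simpa [abs_mul] using mul_le_of_le_one_left (abs_nonneg _) (hc j)).trans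
      (strongLp_apply_le_weakLp hp hφ x)

end LpNorms

section Duality

variable {E : Type*} [NormedAddCommGroup E] [NormedSpace ℝ E] {p q : ℝ} {m : ℕ}

lemma Real.rpow_one_div_le_of_le_mul_rpow_one_div (hpq : p.HolderConjugate q) {S C : ℝ}
    (hS : 0 ≤ S) (hC : 0 ≤ C) (h : S ≤ C * S ^ (1 / q)) : S ^ (1 / p) ≤ C := by
  rcases hS.eq_or_lt with rfl | hS
  · rwa [Real.zero_rpow (one_div_pos.2 hpq.pos).ne']
  have hsplit : S ^ (1 / p) * S ^ (1 / q) = S := by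
    rw [← Real.rpow_add hS, one_div, one_div, hpq.inv_add_inv_eq_one, Real.rpow_one]
  exact le_of_mul_le_mul_right (hsplit.trans_le h) (by positivity)

lemma exists_dual_apply_eq_norm_rpow (hp : p ≠ 0) (x : E) :
    ∃ g : StrongDual ℝ E, g x = ‖x‖ ^ p ∧ ‖g‖ ≤ ‖x‖ ^ (p - 1) := by
  obtain ⟨g, hg, hgx⟩ := exists_dual_vector'' ℝ x
  refine ⟨‖x‖ ^ (p - 1) • g, ?_, ?_⟩
  · rw [smul_apply, hgx, smul_eq_mul, RCLike.ofReal_real_eq_id, id,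
      ← Real.rpow_add_one' (norm_nonneg x) (by simpa using hp), sub_add_cancel]
  · rw [norm_smul, Real.norm_of_nonneg (by positivity)]
    exact mul_le_of_le_one_right (by positivity) hg

lemma strongLp_le_of_forall_abs_sum_le (hpq : p.HolderConjugate q) {w : Fin m → E} {C : ℝ}
    (hC : 0 ≤ C) (h : ∀ f : Fin m → StrongDual ℝ E, |∑ l, f l (w l)| ≤ C * strongLp q f) :
    strongLp p w ≤ C := by
  choose f hfw hf using fun l => exists_dual_apply_eq_norm_rpow hpq.ne_zero (w l)
  set S := ∑ l, ‖w l‖ ^ p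
  have hf_strong : strongLp q f ≤ S ^ (1 / q) := by
    refine Real.rpow_le_rpow (by positivity) (Finset.sum_le_sum fun l _ => ?_)
      (one_div_pos.2 hpq.symm.pos).le
    calc ‖f l‖ ^ q ≤ (‖w l‖ ^ (p - 1)) ^ q :=
          Real.rpow_le_rpow (norm_nonneg _) (hf l) hpq.symm.pos.le
      _ = ‖w l‖ ^ p := by rw [← Real.rpow_mul (norm_nonneg _), hpq.sub_one_mul_conj]
  refine Real.rpow_one_div_le_of_le_mul_rpow_one_div hpq (by positivity) hC ?_
  calc S = |∑ l, f l (w l)| := by simp only [hfw, S]; exact (abs_of_nonneg (by positivity)).symm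
    _ ≤ C * strongLp q f := h f
    _ ≤ C * S ^ (1 / q) := by gcongr

end Duality

lemma Finsupp.linearCombination_eq_sum_equivFin {α R M : Type*} [Semiring R] [AddCommMonoid M]
    [Module R M] (g : α → M) (c : α →₀ R) :
    linearCombination R g c =
      ∑ i, c (c.support.equivFin.symm i) • g (c.support.equivFin.symm i) := by
  rw [linearCombination_apply, Finsupp.sum, ← Finset.sum_coe_sort c.support]
  exact (Equiv.sum_comp c.support.equivFin.symm fun y => c y • g y).symm

namespace IsFreeSpace

variable {Y W FY FW : Type*} [MetricSpace Y] [MetricSpace W]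
  [NormedAddCommGroup FY] [NormedSpace ℝ FY] [CompleteSpace FY]
  [NormedAddCommGroup FW] [NormedSpace ℝ FW] [CompleteSpace FW]
  {y₀ : Y} {w₀ : W} {δY : Y → FY} {δW : W → FW}

lemma dense_coe_span (hF : IsFreeSpace Y y₀ FY δY) :
    Dense (Submodule.span ℝ (Set.range δY) : Set FY) :=
  Submodule.dense_iff_topologicalClosure_eq_top.2 hF.dense_span

lemma denseRange_linearCombination (hF : IsFreeSpace Y y₀ FY δY) :
    DenseRange (Finsupp.linearCombination ℝ δY) := by
  rw [DenseRange, ← LinearMap.coe_range, Finsupp.range_linearCombination]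
  exact hF.dense_coe_span

lemma abs_sum_mul_le_norm (hF : IsFreeSpace Y y₀ FY δY) {s : Y → ℝ} (hs : LipschitzWith 1 s)
    (hs0 : s y₀ = 0) {n : ℕ} (a : Fin n → ℝ) (x : Fin n → Y) :
    |∑ i, a i * s (x i)| ≤ ‖∑ i, a i • δY (x i)‖ := by
  rw [hF.norm_eq]
  refine le_csSup ⟨∑ i, |a i| * dist (x i) y₀, ?_⟩ ⟨s, hs, hs0, rfl⟩
  rintro _ ⟨t, ht, ht0, rfl⟩
  calc |∑ i, a i * t (x i)| ≤ ∑ i, |a i * t (x i)| := Finset.abs_sum_le_sum_abs _ _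
    _ ≤ ∑ i, |a i| * dist (x i) y₀ := by
      gcongr with i
      rw [abs_mul]
      gcongr
      simpa [Real.dist_eq, ht0] using ht.dist_le_mul (x i) y₀

lemma norm_sum_smul_comp_le (hFY : IsFreeSpace Y y₀ FY δY) (hFW : IsFreeSpace W w₀ FW δW)
    {u : Y → W} {L : NNReal} (hL0 : 0 < L) (hL : LipschitzWith L u) (hu0 : u y₀ = w₀)
    {n : ℕ} (a : Fin n → ℝ) (x : Fin n → Y) :
    ‖∑ i, a i • δW (u (x i))‖ ≤ L * ‖∑ i, a i • δY (x i)‖ := by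
  rw [hFW.norm_eq]
  refine Real.sSup_le ?_ (by positivity)
  rintro _ ⟨s, hs, hs0, rfl⟩
  -- `s ∘ u / L` is a competitor in the supremum defining the norm in `FY`
  have ht : LipschitzWith 1 fun y => (L : ℝ)⁻¹ * s (u y) := by
    refine LipschitzWith.of_dist_le_mul fun y y' => ?_
    rw [Real.dist_eq, ← mul_sub, abs_mul, abs_of_pos (by positivity), NNReal.coe_one, one_mul,
      inv_mul_le_iff₀ (by positivity), ← Real.dist_eq]
    simpa using (hs.comp hL).dist_le_mul y y'
  have hL0' : (0 : ℝ) < L := hL0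
  calc |∑ i, a i * s (u (x i))| = |L * ∑ i, a i * ((L : ℝ)⁻¹ * s (u (x i)))| := by
        rw [Finset.mul_sum]
        congr 2 with i
        field_simp
    _ = L * |∑ i, a i * ((L : ℝ)⁻¹ * s (u (x i)))| := by rw [abs_mul, abs_of_pos hL0']
    _ ≤ L * ‖∑ i, a i • δY (x i)‖ := by
        gcongr
        exact hFY.abs_sum_mul_le_norm ht (by simp [hu0, hs0]) a x

theorem exists_lift (hFY : IsFreeSpace Y y₀ FY δY) (hFW : IsFreeSpace W w₀ FW δW) {u : Y → W}
    (hu : ∃ L, LipschitzWith L u) (hu0 : u y₀ = w₀) :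
    ∃ T : FY →L[ℝ] FW, ∀ y, T (δY y) = δW (u y) := by
  obtain ⟨L, hL⟩ := hu
  have hbound : ∀ c, ‖Finsupp.linearCombination ℝ (δW ∘ u) c‖ ≤
      ((L + 1 : NNReal) : ℝ) * ‖Finsupp.linearCombination ℝ δY c‖ := fun c => by
    simp only [Finsupp.linearCombination_eq_sum_equivFin, Function.comp_apply]
    exact hFY.norm_sum_smul_comp_le hFW (by positivity) (hL.weaken le_self_add) hu0 _ _
  refine ⟨(Finsupp.linearCombination ℝ (δW ∘ u)).extendOfNorm
    (Finsupp.linearCombination ℝ δY), fun y => ?_⟩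
  simpa using LinearMap.extendOfNorm_eq hFY.denseRange_linearCombination ⟨_, hbound⟩
    (Finsupp.single y 1)

end IsFreeSpace

section TensorPairing

open TensorProduct

variable {E F G : Type*} [NormedAddCommGroup E] [NormedSpace ℝ E]
  [NormedAddCommGroup F] [NormedSpace ℝ F]

noncomputable def tensorPairing (T : E →L[ℝ] F) : E ⊗[ℝ] StrongDual ℝ F →ₗ[ℝ] ℝ :=
  TensorProduct.lift ((ContinuousLinearMap.apply ℝ ℝ).comp T).toLinearMap₁₂

@[simp]
lemma tensorPairing_tmul (T : E →L[ℝ] F) (e : E) (φ : StrongDual ℝ F) :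
    tensorPairing T (e ⊗ₜ φ) = φ (T e) :=
  rfl

lemma tensorPairing_sum_tmul (T : E →L[ℝ] F) {m : ℕ} (n : Fin m → E)
    (φ : Fin m → StrongDual ℝ F) :
    tensorPairing T (∑ l, n l ⊗ₜ φ l) = ∑ l, φ l (T (n l)) := by
  simp

lemma tensorPairing_sum_sub_tmul {Y W : Type*} {δY : Y → E} {δW : W → F} {u : Y → W}
    {T : E →L[ℝ] F} (hT : ∀ y, T (δY y) = δW (u y)) {k : ℕ} (x y : Fin k → Y)
    (f : Fin k → StrongDual ℝ F) :
    tensorPairing T (∑ l, (δY (x l) - δY (y l)) ⊗ₜ f l) =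
      ∑ l, (f l (δW (u (x l))) - f l (δW (u (y l)))) := by
  simp [hT]

variable [AddCommGroup G] [Module ℝ G]

lemma exists_sum_sub_tmul_eq {Y : Type*} {δ : Y → E} {y₀ : Y} (hδ : δ y₀ = 0) {m : ℕ}
    {n : Fin m → E} (hn : ∀ l, n l ∈ Submodule.span ℝ (Set.range δ)) (g : Fin m → G) :
    ∃ (k : ℕ) (x y : Fin k → Y) (g' : Fin k → G),
      ∑ l, n l ⊗ₜ[ℝ] g l = ∑ l, (δ (x l) - δ (y l)) ⊗ₜ g' l := by
  set S : Set (E ⊗[ℝ] G) := {z | ∃ x y g, (δ x - δ y) ⊗ₜ g = z}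
  have htmul : ∀ e ∈ Submodule.span ℝ (Set.range δ), ∀ g : G, e ⊗ₜ g ∈ Submodule.span ℝ S := by
    intro e he g
    induction he using Submodule.span_induction with
    | mem _ h =>
      obtain ⟨y, rfl⟩ := h
      exact Submodule.subset_span ⟨y, y₀, g, by rw [hδ, sub_zero]⟩
    | zero => simp
    | add _ _ _ _ h h' => rw [add_tmul]; exact add_mem h h'
    | smul a _ _ h => rw [← smul_tmul']; exact Submodule.smul_mem _ a h
  have hsum : ∑ l, n l ⊗ₜ[ℝ] g l ∈ Submodule.span ℝ S :=
    Submodule.sum_mem _ fun l _ => htmul _ (hn l) (g l)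
  obtain ⟨k, a, z, hz⟩ := Submodule.mem_span_set'.1 hsum
  choose x y g' hxyg using fun i => (z i).2
  refine ⟨k, x, y, fun i => a i • g' i, ?_⟩
  rw [← hz]
  exact Finset.sum_congr rfl fun i _ => by rw [← hxyg i, tmul_smul]

lemma abs_sum_apply_le_of_forall_molecule {Y W : Type*} {δY : Y → E} {δW : W → F}
    {u : Y → W} {T : E →L[ℝ] F} {y₀ : Y} (hδ : δY y₀ = 0) (hT : ∀ y, T (δY y) = δW (u y))
    {N : E ⊗[ℝ] StrongDual ℝ F → ℝ} {K : ℝ}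
    (hu : ∀ (k : ℕ) (x y : Fin k → Y) (f : Fin k → StrongDual ℝ F),
      |∑ l, (f l (δW (u (x l))) - f l (δW (u (y l))))| ≤
        K * N (∑ l, (δY (x l) - δY (y l)) ⊗ₜ[ℝ] f l))
    {m : ℕ} {n : Fin m → E} (hn : ∀ l, n l ∈ Submodule.span ℝ (Set.range δY))
    (f : Fin m → StrongDual ℝ F) :
    |∑ l, f l (T (n l))| ≤ K * N (∑ l, n l ⊗ₜ[ℝ] f l) := by
  obtain ⟨k, x, y, g, hrepr⟩ := exists_sum_sub_tmul_eq hδ hn f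
  rw [← tensorPairing_sum_tmul, hrepr, tensorPairing_sum_sub_tmul hT]
  exact hu k x y g

end TensorPairing

section Operators

variable {E F G : Type*} [NormedAddCommGroup E] [NormedSpace ℝ E]
  [NormedAddCommGroup F] [NormedSpace ℝ F] [NormedAddCommGroup G] [NormedSpace ℝ G]
  {p q : ℝ} {m : ℕ}

lemma dpNorm_sum_tmul_le (n : Fin m → E) (h : Fin m → G) :
    dpNorm p q (∑ j, n j ⊗ₜ[ℝ] h j) ≤ weakLp p n * strongLp q h :=
  csInf_le ⟨0, by
    rintro _ ⟨_, n', h', -, rfl⟩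
    exact mul_nonneg (weakLp_nonneg n') (strongLp_nonneg h')⟩ ⟨m, n, h, rfl, rfl⟩

lemma gpNorm_sum_tmul_le (n : Fin m → E) (h : Fin m → G) :
    gpNorm p q (∑ j, n j ⊗ₜ[ℝ] h j) ≤ strongLp p n * weakLp q h :=
  csInf_le ⟨0, by
    rintro _ ⟨_, n', h', -, rfl⟩
    exact mul_nonneg (strongLp_nonneg n') (weakLp_nonneg h')⟩ ⟨m, n, h, rfl, rfl⟩

/-- Cohen's theorem. -/
theorem IsStronglyPSumming.isPNuclear_comp {B : F →L[ℝ] G} {A : E →L[ℝ] F}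
    (hB : IsStronglyPSumming p q B) (hA : IsPSumming p A) : IsPNuclear p q (B.comp A) := by
  obtain ⟨KB, hKB, hB⟩ := hB
  obtain ⟨KA, hKA, hA⟩ := hA
  refine ⟨KB * KA, mul_pos hKB hKA, fun m x φ => ?_⟩
  calc ∑ j, |φ j (B (A (x j)))| ≤ KB * strongLp p (fun j => A (x j)) * weakLp q φ := hB m _ φ
    _ ≤ KB * (KA * weakLp p x) * weakLp q φ := by
        gcongr
        · exact weakLp_nonneg φ
        · exact hA m x
    _ = KB * KA * weakLp p x * weakLp q φ := by ring

lemma IsPNuclear.abs_tensorPairing_le {T : E →L[ℝ] F} (hT : IsPNuclear p q T) :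
    ∃ K > 0, ∀ z, |tensorPairing T z| ≤ K * wpNorm p q z := by
  obtain ⟨K, hK, hT⟩ := hT
  refine ⟨K, hK, fun z => ?_⟩
  rw [← div_le_iff₀' hK]
  obtain ⟨k, n, h, hz⟩ := TensorProduct.exists_sum_tmul_eq z
  refine le_csInf ⟨_, k, n, h, hz, rfl⟩ ?_
  rintro _ ⟨k', n', h', hz', rfl⟩
  rw [div_le_iff₀' hK, hz', tensorPairing_sum_tmul]
  calc |∑ l, h' l (T (n' l))| ≤ ∑ l, |h' l (T (n' l))| := Finset.abs_sum_le_sum_abs _ _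
    _ ≤ K * weakLp p n' * weakLp q h' := hT k' n' h'
    _ = K * (weakLp p n' * weakLp q h') := by ring

end Operators

section Linearization

variable {Y W FY FW : Type*} [NormedAddCommGroup FY] [NormedSpace ℝ FY]
  [NormedAddCommGroup FW] [NormedSpace ℝ FW] {δY : Y → FY} {δW : W → FW} {u : Y → W}
  {T : FY →L[ℝ] FW} {p q : ℝ}

theorem MSLipPSumming.isPSumming [MetricSpace Y] [CompleteSpace FY] {y₀ : Y}
    (hF : IsFreeSpace Y y₀ FY δY) (hpq : p.HolderConjugate q)
    (hT : ∀ y, T (δY y) = δW (u y)) (hu : MSLipPSumming p q δY δW u) : IsPSumming p T := by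
  obtain ⟨K, hK, hu⟩ := hu
  refine ⟨K, hK, fun m => (dense_pi Set.univ fun _ _ => hF.dense_coe_span).induction ?_ ?_⟩
  · intro n hn
    refine strongLp_le_of_forall_abs_sum_le hpq (mul_nonneg hK.le (weakLp_nonneg n)) fun f => ?_
    calc |∑ l, f l (T (n l))| ≤ K * dpNorm p q (∑ l, n l ⊗ₜ[ℝ] f l) :=
          abs_sum_apply_le_of_forall_molecule hF.map_base hT hu (fun l => hn l trivial) f
      _ ≤ K * (weakLp p n * strongLp q f) := by gcongr; exact dpNorm_sum_tmul_le n f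
      _ = K * weakLp p n * strongLp q f := by ring
  · exact isClosed_le ((continuous_strongLp hpq.pos).comp
      (continuous_pi fun j => T.continuous.comp (continuous_apply j)))
      (continuous_const.mul (continuous_weakLp hpq.lt.le))

theorem MSStronglyLipPSumming.isStronglyPSumming [MetricSpace Y] [CompleteSpace FY] {y₀ : Y}
    (hF : IsFreeSpace Y y₀ FY δY) (hp : 0 < p) (hq : 0 ≤ q) (hT : ∀ y, T (δY y) = δW (u y))
    (hu : MSStronglyLipPSumming p q δY δW u) : IsStronglyPSumming p q T := by
  obtain ⟨K, hK, hu⟩ := hu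
  refine ⟨K, hK, fun m w h => ?_⟩
  revert w
  refine (dense_pi Set.univ fun _ _ => hF.dense_coe_span).induction (fun w hw => ?_) ?_
  · -- multiplying each `h l` by a sign turns the sum of absolute values into a pairing
    have hsign : ∀ a : ℝ, |(SignType.sign a : ℝ)| ≤ 1 := fun a => by
      rcases SignType.sign a with _ | _ | _ <;> simp
    set c : Fin m → ℝ := fun l => SignType.sign (h l (T (w l)))
    calc ∑ l, |h l (T (w l))| = ∑ l, (c l • h l) (T (w l)) := by simp [c, sign_mul_self]
      _ ≤ |∑ l, (c l • h l) (T (w l))| := le_abs_self _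
      _ ≤ K * gpNorm p q (∑ l, w l ⊗ₜ[ℝ] (c l • h l)) :=
          abs_sum_apply_le_of_forall_molecule hF.map_base hT hu (fun l => hw l trivial) _
      _ ≤ K * (strongLp p w * weakLp q fun l => c l • h l) := by
          gcongr; exact gpNorm_sum_tmul_le w _
      _ ≤ K * (strongLp p w * weakLp q h) := by
          gcongr
          · exact strongLp_nonneg w
          · exact weakLp_smul_le hq h fun l => hsign _
      _ = K * strongLp p w * weakLp q h := by ring
  · exact isClosed_le (continuous_finsetSum _ fun l _ =>
      ((h l).continuous.comp (T.continuous.comp (continuous_apply l))).abs)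
      ((continuous_const.mul (continuous_strongLp hp)).mul continuous_const)

theorem IsPNuclear.msLipPNuclear (hN : IsPNuclear p q T) (hT : ∀ y, T (δY y) = δW (u y)) :
    MSLipPNuclear p q δY δW u := by
  obtain ⟨K, hK, hN⟩ := hN.abs_tensorPairing_le
  refine ⟨K, hK, fun k x y f => ?_⟩
  rw [← tensorPairing_sum_sub_tmul hT]
  exact hN _

end Linearization

/-- Theorem 3.9: the composition of an MS-Lipschitz `p`-summing operator
`u : Y → W` with an MS-strongly Lipschitz `p`-summing operator `v : W → Z` is
MS-Lipschitz `p`-nuclear. -/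
theorem msLipPNuclear_comp
    {Y W Z FY FW FZ : Type*} [MetricSpace Y] [Inhabited Y] [MetricSpace W] [Inhabited W]
    [MetricSpace Z] [Inhabited Z]
    [NormedAddCommGroup FY] [NormedSpace ℝ FY] [CompleteSpace FY]
    [NormedAddCommGroup FW] [NormedSpace ℝ FW] [CompleteSpace FW]
    [NormedAddCommGroup FZ] [NormedSpace ℝ FZ] [CompleteSpace FZ]
    {δY : Y → FY} {δW : W → FW} {δZ : Z → FZ}
    (hFY : IsFreeSpace Y default FY δY) (hFW : IsFreeSpace W default FW δW)
    (hFZ : IsFreeSpace Z default FZ δZ)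
    {p q : ℝ} (hpq : p.HolderConjugate q)
    (u : Y → W) (hulip : ∃ K, LipschitzWith K u) (hu0 : u default = default)
    (v : W → Z) (hvlip : ∃ K, LipschitzWith K v) (hv0 : v default = default)
    (hu : MSLipPSumming p q δY δW u)
    (hv : MSStronglyLipPSumming p q δW δZ v) :
    MSLipPNuclear p q δY δZ (v ∘ u) := by
  obtain ⟨Tu, hTu⟩ := hFY.exists_lift hFW hulip hu0
  obtain ⟨Tv, hTv⟩ := hFW.exists_lift hFZ hvlip hv0
  have hTu_summing : IsPSumming p Tu := hu.isPSumming hFY hpq hTu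
  have hTv_strongly : IsStronglyPSumming p q Tv :=
    hv.isStronglyPSumming hFW hpq.pos hpq.symm.nonneg hTv
  exact (hTv_strongly.isPNuclear_comp hTu_summing).msLipPNuclear fun y => by simp [hTu, hTv]
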